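/- arXiv:1602.08850 — 2 statements merged into one kernel-verified Lean document; each statement's English description precedes it below -/
import Mathlib

section
/- Let A, B be discrete sets in ℝ^d and τ ∈ ℝ^d, with each of B, B + τ, B − τ disjoint from A. Let Ω ⊂ ℝ^d be bounded measurable of positive measure. If Λ = A ∪ B is a spectrum for Ω, and the exponential systems E(A ∪ (B+τ)) and E(A ∪ (B−τ)) are both orthogonal in L²(Ω), then each of A ∪ (B+τ) and A ∪ (B−τ) is a spectrum for Ω. -/
open MeasureTheory Complex Set
open scoped Pointwise ENNReal RealInnerProductSpace

noncomputable section

/-- Euclidean space `ℝ^d`. -/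
abbrev Ed (d : ℕ) := EuclideanSpace ℝ (Fin d)

/-- The exponential function `e_λ(x) = exp(2πi⟨λ,x⟩)` on `ℝ^d`. -/
def expF {d : ℕ} (l x : Ed d) : ℂ :=
  Complex.exp (2 * Real.pi * Complex.I * Complex.ofReal (inner ℝ l x : ℝ))

/-- The Fourier transform of the indicator function of `Ω ⊆ ℝ^d`. -/
def ftInd {d : ℕ} (Om : Set (Ed d)) (xi : Ed d) : ℂ :=
  ∫ x in Om, Complex.exp (-(2 * Real.pi * Complex.I * Complex.ofReal (inner ℝ xi x : ℝ)))

/-- The exponential system `E(Λ)` is orthogonal in `L²(Ω)`. -/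
def IsOrthSys {d : ℕ} (Om L : Set (Ed d)) : Prop :=
  ∀ l ∈ L, ∀ m ∈ L, l ≠ m →
    ∫ x in Om, expF l x * (starRingEnd ℂ) (expF m x) = 0

/-- `Λ` is a spectrum for `Ω`: the system `E(Λ)` is orthogonal and complete in `L²(Ω)`. -/
def IsSpectrum {d : ℕ} (Om L : Set (Ed d)) : Prop :=
  IsOrthSys Om L ∧
  ∀ f : Ed d → ℂ, MemLp f 2 (volume.restrict Om) →
    (∀ l ∈ L, ∫ x in Om, f x * (starRingEnd ℂ) (expF l x) = 0) →
    f =ᵐ[volume.restrict Om] 0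

/-- `f + Λ` is a tiling: `∑_{λ∈Λ} f(x-λ) = 1` a.e. -/
def IsTiling {E : Type*} [NormedAddCommGroup E] [MeasureSpace E]
    (f : E → ℝ) (L : Set E) : Prop :=
  ∀ᵐ x : E, ∑' l : L, ENNReal.ofReal (f (x - (l : E))) = 1

/-- `f + Λ` is a packing: `∑_{λ∈Λ} f(x-λ) ≤ 1` a.e. -/
def IsPacking {E : Type*} [NormedAddCommGroup E] [MeasureSpace E]
    (f : E → ℝ) (L : Set E) : Prop :=
  ∀ᵐ x : E, ∑' l : L, ENNReal.ofReal (f (x - (l : E))) ≤ 1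

/-- `Λ` is uniformly discrete with separation constant at least `δ`. -/
def UnifDiscrete {E : Type*} [PseudoMetricSpace E] (L : Set E) (δ : ℝ) : Prop :=
  ∀ l ∈ L, ∀ m ∈ L, l ≠ m → δ ≤ dist l m

/-- Weak convergence of a sequence of uniformly discrete sets. -/
def WeakLim {E : Type*} [SeminormedAddCommGroup E] (Ln : ℕ → Set E) (L : Set E) : Prop :=
  ∀ ε > (0 : ℝ), ∀ R > (0 : ℝ), ∃ N : ℕ, ∀ n ≥ N,
    Ln n ∩ Metric.ball 0 R ⊆ L + Metric.ball 0 ε ∧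
    L ∩ Metric.ball 0 R ⊆ Ln n + Metric.ball 0 ε

open scoped ComplexConjugate InnerProductSpace

/-!
If `f ⟂ E(A ∪ (B + τ))`, then `g = f · conj e_τ` satisfies `⟨g, e_b⟩ = ⟨f, e_{b+τ}⟩ = 0` for
`b ∈ B`, so `g` is orthogonal to the closed span of `E(B)`. For `b ∈ B` the exponential `e_{b-τ}`
is orthogonal to `E(A)`, and since `E(A ∪ B)` is complete and `E(A) ⟂ E(B)`, it lies in that closed
span. Hence `⟨f, e_b⟩ = ⟨g, e_{b-τ}⟩ = 0`, so `f ⟂ E(A ∪ B)` and `f = 0`. Replacing `τ` by `-τ`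
gives the other set.
-/

section Orthogonal
variable {𝕜 E : Type*} [RCLike 𝕜] [NormedAddCommGroup E] [InnerProductSpace 𝕜 E]

theorem inner_eq_zero_of_mem_topologicalClosure_span {T : Set E} {v w : E}
    (hv : ∀ t ∈ T, ⟪v, t⟫_𝕜 = 0) (hw : w ∈ (Submodule.span 𝕜 T).topologicalClosure) :
    ⟪v, w⟫_𝕜 = 0 := by
  have hle : (Submodule.span 𝕜 T).topologicalClosure ≤ (𝕜 ∙ v)ᗮ :=
    Submodule.topologicalClosure_minimal _
      (Submodule.span_le.2 fun t ht =>
        Submodule.mem_orthogonal_singleton_iff_inner_right.2 (hv t ht))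
      (Submodule.isClosed_orthogonal _)
  exact Submodule.mem_orthogonal_singleton_iff_inner_right.1 (hle hw)

/-- The component of `v` orthogonal to the closed span of `T` is orthogonal to all of `S ∪ T`. -/
theorem mem_topologicalClosure_span_of_inner_eq_zero [CompleteSpace E] {S T : Set E}
    (hST : ∀ s ∈ S, ∀ t ∈ T, ⟪s, t⟫_𝕜 = 0)
    (htotal : ∀ w : E, (∀ u ∈ S ∪ T, ⟪u, w⟫_𝕜 = 0) → w = 0)
    {v : E} (hv : ∀ s ∈ S, ⟪s, v⟫_𝕜 = 0) : v ∈ (Submodule.span 𝕜 T).topologicalClosure := by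
  set K := (Submodule.span 𝕜 T).topologicalClosure
  have : CompleteSpace K := (Submodule.isClosed_topologicalClosure _).completeSpace_coe
  suffices v - K.starProjection v = 0 from sub_eq_zero.1 this ▸ K.starProjection_apply_mem v
  refine htotal _ fun u hu => ?_
  rcases hu with hs | ht
  · rw [inner_sub_right, hv u hs,
      inner_eq_zero_of_mem_topologicalClosure_span (hST u hs) (K.starProjection_apply_mem v),
      sub_zero]
  · exact Submodule.inner_right_of_mem_orthogonal
      (Submodule.le_topologicalClosure _ (Submodule.subset_span ht))
      (K.sub_starProjection_mem_orthogonal v)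

end Orthogonal

section Exponentials
variable {d : ℕ}

theorem expF_add (l m x : Ed d) : expF (l + m) x = expF l x * expF m x := by
  rw [expF, expF, expF, ← Complex.exp_add, inner_add_left]
  congr 1
  push_cast
  ring

theorem norm_expF (l x : Ed d) : ‖expF l x‖ = 1 := by
  rw [expF, Complex.norm_exp]
  simp [Complex.mul_re]

theorem continuous_expF (l : Ed d) : Continuous (expF l) := by
  unfold expF
  fun_prop

theorem mul_conj_expF_mul_conj_expF (f : Ed d → ℂ) (τ m x : Ed d) :
    f x * conj (expF τ x) * conj (expF m x) = f x * conj (expF (m + τ) x) := by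
  rw [expF_add, map_mul, mul_assoc, mul_comm (conj (expF τ x))]

end Exponentials

section L2
variable {d : ℕ} {Om : Set (Ed d)}

theorem memLp_expF (hB : Bornology.IsBounded Om) (l : Ed d) :
    MemLp (expF l) 2 (volume.restrict Om) :=
  have : IsFiniteMeasure (volume.restrict Om) := isFiniteMeasure_restrict.2 hB.measure_lt_top.ne
  MemLp.of_bound (continuous_expF l).aestronglyMeasurable 1
    (Filter.Eventually.of_forall fun x => (norm_expF l x).le)

theorem MeasureTheory.MemLp.mul_conj_expF {f : Ed d → ℂ} (hf : MemLp f 2 (volume.restrict Om))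
    (τ : Ed d) :
    MemLp (fun x => f x * conj (expF τ x)) 2 (volume.restrict Om) :=
  hf.of_le (hf.aestronglyMeasurable.mul (continuous_expF τ).star.aestronglyMeasurable)
    (Filter.Eventually.of_forall fun x => by simp [norm_expF])

def expLp (hB : Bornology.IsBounded Om) (l : Ed d) : Lp ℂ 2 (volume.restrict Om) :=
  (memLp_expF hB l).toLp (expF l)

theorem inner_toLp_expLp (hB : Bornology.IsBounded Om) {f : Ed d → ℂ}
    (hf : MemLp f 2 (volume.restrict Om)) (l : Ed d) :
    ⟪hf.toLp f, expLp hB l⟫_ℂ = conj (∫ x in Om, f x * conj (expF l x)) := by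
  rw [L2.inner_def, ← integral_conj]
  refine integral_congr_ae ?_
  filter_upwards [hf.coeFn_toLp, (memLp_expF hB l).coeFn_toLp] with x hfx hlx
  rw [expLp, hfx, hlx, RCLike.inner_apply, map_mul, Complex.conj_conj, mul_comm]

theorem inner_expLp (hB : Bornology.IsBounded Om) (w : Lp ℂ 2 (volume.restrict Om)) (l : Ed d) :
    ⟪w, expLp hB l⟫_ℂ = conj (∫ x in Om, w x * conj (expF l x)) := by
  conv_lhs => rw [← Lp.toLp_coeFn w (Lp.memLp w)]
  exact inner_toLp_expLp hB (Lp.memLp w) l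

theorem IsOrthSys.inner_expLp_eq_zero (hB : Bornology.IsBounded Om) {L : Set (Ed d)}
    (hL : IsOrthSys Om L) {l m : Ed d} (hl : l ∈ L) (hm : m ∈ L) (hlm : l ≠ m) :
    ⟪expLp hB l, expLp hB m⟫_ℂ = 0 := by
  rw [expLp, inner_toLp_expLp, hL l hl m hm hlm, map_zero]

theorem IsSpectrum.eq_zero_of_inner_expLp (hB : Bornology.IsBounded Om) {L : Set (Ed d)}
    (hL : IsSpectrum Om L) (w : Lp ℂ 2 (volume.restrict Om))
    (hw : ∀ l ∈ L, ⟪expLp hB l, w⟫_ℂ = 0) : w = 0 := by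
  refine Lp.eq_zero_iff_ae_eq_zero.2 (hL.2 w (Lp.memLp w) fun l hl => ?_)
  have h := hw l hl
  rwa [← inner_conj_symm, inner_expLp, Complex.conj_conj] at h

end L2

section Spectrum
variable {d : ℕ} {Om : Set (Ed d)} {A B : Set (Ed d)}

theorem IsSpectrum.expLp_mem_closure_span (hB : Bornology.IsBounded Om)
    (hspec : IsSpectrum Om (A ∪ B)) (hAB : Disjoint A B) {v : Ed d}
    (hv : ∀ a ∈ A, ∫ x in Om, expF a x * conj (expF v x) = 0) :
    expLp hB v ∈ (Submodule.span ℂ (expLp hB '' B)).topologicalClosure := by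
  refine mem_topologicalClosure_span_of_inner_eq_zero (S := expLp hB '' A) ?_ ?_ ?_
  · rintro _ ⟨a, ha, rfl⟩ _ ⟨b, hb, rfl⟩
    exact hspec.1.inner_expLp_eq_zero hB (Or.inl ha) (Or.inr hb) (hAB.ne_of_mem ha hb)
  · refine fun w hw => hspec.eq_zero_of_inner_expLp hB w fun l hl => hw _ ?_
    exact image_union (expLp hB) A B ▸ mem_image_of_mem _ hl
  · rintro _ ⟨a, ha, rfl⟩
    rw [expLp, inner_toLp_expLp, hv a ha, map_zero]

theorem IsSpectrum.union_image_add (hB : Bornology.IsBounded Om) (τ : Ed d)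
    (hAB : Disjoint A B) (hAB_sub : Disjoint A ((· - τ) '' B)) (hspec : IsSpectrum Om (A ∪ B))
    (horth_add : IsOrthSys Om (A ∪ (· + τ) '' B)) (horth_sub : IsOrthSys Om (A ∪ (· - τ) '' B)) :
    IsSpectrum Om (A ∪ (· + τ) '' B) := by
  refine ⟨horth_add, fun f hf hf_perp => hspec.2 f hf ?_⟩
  rintro l (ha | hl)
  · exact hf_perp l (Or.inl ha)
  have hg := hf.mul_conj_expF τ
  have hg_perp : ∀ t ∈ expLp hB '' B, ⟪hg.toLp _, t⟫_ℂ = 0 := by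
    rintro _ ⟨b, hb, rfl⟩
    simp_rw [inner_toLp_expLp, mul_conj_expF_mul_conj_expF, hf_perp (b + τ) (Or.inr ⟨b, hb, rfl⟩),
      map_zero]
  have hmem : expLp hB (l - τ) ∈ (Submodule.span ℂ (expLp hB '' B)).topologicalClosure :=
    hspec.expLp_mem_closure_span hB hAB fun a ha =>
      horth_sub a (Or.inl ha) (l - τ) (Or.inr ⟨l, hl, rfl⟩) (hAB_sub.ne_of_mem ha ⟨l, hl, rfl⟩)
  have h := inner_eq_zero_of_mem_topologicalClosure_span hg_perp hmem
  simp_rw [inner_toLp_expLp, mul_conj_expF_mul_conj_expF, sub_add_cancel, map_eq_zero] at h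
  exact h

end Spectrum

theorem stmt11_general {d : ℕ} (Om : Set (Ed d)) (hB : Bornology.IsBounded Om)
    (A B : Set (Ed d)) (τ : Ed d)
    (h1 : Disjoint A B)
    (h2 : Disjoint A ((fun b => b + τ) '' B))
    (h3 : Disjoint A ((fun b => b - τ) '' B))
    (hspec : IsSpectrum Om (A ∪ B))
    (ho1 : IsOrthSys Om (A ∪ (fun b => b + τ) '' B))
    (ho2 : IsOrthSys Om (A ∪ (fun b => b - τ) '' B)) :
    IsSpectrum Om (A ∪ (fun b => b + τ) '' B) ∧
    IsSpectrum Om (A ∪ (fun b => b - τ) '' B) := by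
  refine ⟨hspec.union_image_add hB τ h1 h3 ho1 ho2, ?_⟩
  simpa only [sub_neg_eq_add, ← sub_eq_add_neg] using
    hspec.union_image_add hB (-τ) h1 (by simpa only [sub_neg_eq_add] using h2)
      (by simpa only [← sub_eq_add_neg] using ho2) (by simpa only [sub_neg_eq_add] using ho1)

theorem stmt11 {d : ℕ} (Om : Set (Ed d)) (hB : Bornology.IsBounded Om)
    (hM : MeasurableSet Om) (hpos : 0 < volume Om)
    (A B : Set (Ed d)) (τ : Ed d)
    (h1 : Disjoint A B)
    (h2 : Disjoint A ((fun b => b + τ) '' B))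
    (h3 : Disjoint A ((fun b => b - τ) '' B))
    (hspec : IsSpectrum Om (A ∪ B))
    (ho1 : IsOrthSys Om (A ∪ (fun b => b + τ) '' B))
    (ho2 : IsOrthSys Om (A ∪ (fun b => b - τ) '' B)) :
    IsSpectrum Om (A ∪ (fun b => b + τ) '' B) ∧
    IsSpectrum Om (A ∪ (fun b => b - τ) '' B) :=
  stmt11_general Om hB A B τ h1 h2 h3 hspec ho1 ho2
end
end

section
/- Let Ω = [−1/2, 1/2] × Σ ⊂ ℝ × ℝ^{d−1} with Σ bounded measurable of positive measure, and let t ∈ ℝ. Define α_t(λ) := λ if λ_1 ∈ ℤ and α_t(λ) := λ + (t, 0, …, 0) if λ_1 ∉ ℤ. If Ω + Λ is a tiling, then α_t is injective on Λ and Ω + α_t(Λ) is also a tiling. -/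
open MeasureTheory Complex Set
open scoped Pointwise ENNReal RealInnerProductSpace

noncomputable section

open Classical in
/-- The map `α_t` fixing points with integer first coordinate and shifting the others by `t`. -/
def alphaT {n : ℕ} (t : ℝ) (l : ℝ × Ed n) : ℝ × Ed n :=
  if ∃ k : ℤ, l.1 = (k : ℝ) then l else (l.1 + t, l.2)

/-! A tiling of `ℝ × ℝⁿ` by translates of `[-1/2, 1/2] × Σ` restricts, over almost every `y`, to
a tiling of the line by the translates of `[-1/2, 1/2]` indexed by the `λ ∈ Λ` with `y - λ₂ ∈ Σ`.
Such a one-dimensional tiling is `1`-separated and has no gaps, so it is a coset of `ℤ`. Hence on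
each such fiber `α_t` is either the identity or the translation by `(t, 0)`, which turns the tiling
over `y` into a translate of itself. Since `Σ` has positive measure, any two `λ, μ ∈ Λ` with
`λ₂ = μ₂` lie in a common such fiber, so `α_t` is injective. -/

/-- Multiplicities count: `a` is a family, not a set. -/
def TilesByUnitInterval {ι : Type*} (a : ι → ℝ) : Prop :=
  ∀ᵐ x : ℝ, ∑' i, (Icc (-(1/2) : ℝ) (1/2)).indicator (1 : ℝ → ℝ≥0∞) (x - a i) = 1

namespace TilesByUnitInterval

variable {ι : Type*} {a : ι → ℝ}

lemma exists_mem_Ioo_tsum_eq_one (h : TilesByUnitInterval a) {b c : ℝ} (hbc : b < c) :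
    ∃ x ∈ Ioo b c,
      ∑' i, (Icc (-(1/2) : ℝ) (1/2)).indicator (1 : ℝ → ℝ≥0∞) (x - a i) = 1 :=
  Measure.exists_mem_of_measure_ne_zero_of_ae (by simp [hbc]) (ae_restrict_of_ae h)

lemma exists_mem_Ioo_covered (h : TilesByUnitInterval a) {b c : ℝ} (hbc : b < c) :
    ∃ x ∈ Ioo b c, ∃ i, x - a i ∈ Icc (-(1/2) : ℝ) (1/2) := by
  obtain ⟨x, hx, hsum⟩ := h.exists_mem_Ioo_tsum_eq_one hbc
  refine ⟨x, hx, ?_⟩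
  by_contra! hnone
  rw [tsum_congr fun i => indicator_of_notMem (hnone i) _, tsum_zero] at hsum
  exact zero_ne_one hsum

lemma one_le_abs_sub (h : TilesByUnitInterval a) {i j : ι} (hij : i ≠ j) :
    1 ≤ |a i - a j| := by
  classical
  wlog hji : a j ≤ a i generalizing i j
  · rw [abs_sub_comm]
    exact this hij.symm (le_of_not_ge hji)
  by_contra! hlt
  rw [abs_of_nonneg (sub_nonneg.2 hji)] at hlt
  obtain ⟨x, ⟨hx₁, hx₂⟩, hsum⟩ :=
    h.exists_mem_Ioo_tsum_eq_one (show a i - 1/2 < a j + 1/2 by linarith)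
  have hmem : ∀ k ∈ ({i, j} : Finset ι), x - a k ∈ Icc (-(1/2) : ℝ) (1/2) := by
    simp only [Finset.mem_insert, Finset.mem_singleton]
    rintro k (rfl | rfl) <;> constructor <;> linarith
  have htwo : ∑ k ∈ {i, j}, (Icc (-(1/2) : ℝ) (1/2)).indicator (1 : ℝ → ℝ≥0∞) (x - a k) = 2 := by
    rw [Finset.sum_congr rfl fun k hk => indicator_of_mem (hmem k hk) _,
      Finset.sum_pair hij]
    norm_num
  have hle := ENNReal.sum_le_tsum (f := fun k =>
    (Icc (-(1/2) : ℝ) (1/2)).indicator (1 : ℝ → ℝ≥0∞) (x - a k)) {i, j}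
  rw [htwo, hsum] at hle
  norm_num at hle

lemma exists_near_add_one (h : TilesByUnitInterval a) (i : ι) {ε : ℝ} (hε : 0 < ε) :
    ∃ j, a i + 1 ≤ a j ∧ a j < a i + 1 + ε := by
  obtain ⟨x, ⟨hx₁, hx₂⟩, j, hj₁, hj₂⟩ :=
    h.exists_mem_Ioo_covered (show a i + 1/2 < a i + 1/2 + ε by linarith)
  have hji : j ≠ i := by
    rintro rfl
    linarith
  have hsep := h.one_le_abs_sub hji
  rw [abs_of_pos (by linarith)] at hsep
  exact ⟨j, by linarith, by linarith⟩

lemma exists_eq_add_one (h : TilesByUnitInterval a) (i : ι) : ∃ j, a j = a i + 1 := by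
  by_contra! hne
  obtain ⟨j, hj₁, hj₂⟩ := h.exists_near_add_one i one_pos
  have hj : a i + 1 < a j := lt_of_le_of_ne hj₁ (hne j).symm
  obtain ⟨k, hk₁, hk₂⟩ := h.exists_near_add_one i (sub_pos.2 hj)
  have hkj : k ≠ j := by
    rintro rfl
    linarith
  exact (abs_sub_lt_iff.2 ⟨by linarith, by linarith⟩).not_ge (h.one_le_abs_sub hkj)

lemma exists_eq_add_nat (h : TilesByUnitInterval a) (i : ι) (k : ℕ) : ∃ j, a j = a i + k := by
  induction k with
  | zero => exact ⟨i, by simp⟩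
  | succ k ih =>
    obtain ⟨j, hj⟩ := ih
    obtain ⟨l, hl⟩ := h.exists_eq_add_one j
    exact ⟨l, by rw [hl, hj]; push_cast; ring⟩

theorem exists_int_sub_eq (h : TilesByUnitInterval a) (i j : ι) : ∃ k : ℤ, a i - a j = k := by
  wlog hji : a j ≤ a i generalizing i j
  · obtain ⟨k, hk⟩ := this j i (le_of_not_ge hji)
    exact ⟨-k, by push_cast; linarith⟩
  obtain ⟨m, hm⟩ := h.exists_eq_add_nat j ⌊a i - a j⌋₊
  by_cases him : i = m
  · have : a i = a j + ⌊a i - a j⌋₊ := him ▸ hm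
    exact ⟨⌊a i - a j⌋₊, by rw [Int.cast_natCast]; linarith⟩
  · have hsep := h.one_le_abs_sub him
    have hfloor := Nat.floor_le (sub_nonneg.2 hji)
    have hlt_floor := Nat.lt_floor_add_one (a i - a j)
    rw [hm, abs_of_nonneg (by linarith)] at hsep
    linarith

end TilesByUnitInterval

section Fibers

variable {E : Type*}

def fiber [Sub E] (L : Set (ℝ × E)) (S : Set E) (y : E) : Set (ℝ × E) :=
  {l | l ∈ L ∧ y - l.2 ∈ S}

lemma tsum_ofReal_indicator_prod [AddGroup E] (L : Set (ℝ × E)) (J : Set ℝ) (S : Set E)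
    (z : ℝ × E) :
    ∑' l : L, ENNReal.ofReal ((J ×ˢ S).indicator (fun _ => (1 : ℝ)) (z - l)) =
      ∑' l : fiber L S z.2, J.indicator (1 : ℝ → ℝ≥0∞) (z.1 - (l : ℝ × E).1) := by
  rw [tsum_subtype L fun l => ENNReal.ofReal ((J ×ˢ S).indicator (fun _ => (1 : ℝ)) (z - l)),
    tsum_subtype (fiber L S z.2) fun l => J.indicator (1 : ℝ → ℝ≥0∞) (z.1 - l.1)]
  congr 1
  ext l
  by_cases hJ : z.1 - l.1 ∈ J <;> by_cases hS : z.2 - l.2 ∈ S <;> by_cases hL : l ∈ L <;>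
    simp [fiber, hJ, hS, hL]

lemma IsTiling.ae_tilesByUnitInterval_fiber [NormedAddCommGroup E] [MeasureSpace E]
    [SFinite (volume : Measure E)] {L : Set (ℝ × E)} {S : Set E}
    (h : IsTiling ((Icc (-(1/2) : ℝ) (1/2) ×ˢ S).indicator fun _ => (1 : ℝ)) L) :
    ∀ᵐ y : E, TilesByUnitInterval fun l : fiber L S y => (l : ℝ × E).1 := by
  simp_rw [IsTiling, tsum_ofReal_indicator_prod, Measure.volume_eq_prod] at h
  exact Measure.ae_ae_of_ae_prod (Measure.measurePreserving_swap.quasiMeasurePreserving.ae h)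

end Fibers

section AlphaT

variable {n : ℕ}

lemma alphaT_snd (t : ℝ) (l : ℝ × Ed n) : (alphaT t l).2 = l.2 := by
  unfold alphaT
  split_ifs <;> rfl

lemma exists_alphaT_eq_add (t : ℝ) {A : Set (ℝ × Ed n)}
    (hA : ∀ l ∈ A, ∀ m ∈ A, ∃ k : ℤ, l.1 - m.1 = k) :
    ∃ s ∈ ({0, t} : Set ℝ), ∀ l ∈ A, alphaT t l = l + (s, 0) := by
  by_cases hinteger : ∃ l ∈ A, ∃ k : ℤ, l.1 = k
  · obtain ⟨l, hl, k, hk⟩ := hinteger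
    refine ⟨0, by simp, fun m hm => ?_⟩
    obtain ⟨j, hj⟩ := hA l hl m hm
    rw [alphaT, if_pos ⟨k - j, by push_cast; linarith⟩]
    simp
  · push Not at hinteger
    refine ⟨t, by simp, fun m hm => ?_⟩
    rw [alphaT, if_neg (not_exists.2 (hinteger m hm))]
    ext <;> simp

lemma TilesByUnitInterval.exists_alphaT_eq_add_on_fiber (t : ℝ) {L : Set (ℝ × Ed n)}
    {S : Set (Ed n)} {y : Ed n} (h : TilesByUnitInterval fun l : fiber L S y => (l : ℝ × Ed n).1) :
    ∃ s ∈ ({0, t} : Set ℝ), ∀ l ∈ fiber L S y, alphaT t l = l + (s, 0) :=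
  exists_alphaT_eq_add t fun l hl m hm => h.exists_int_sub_eq ⟨l, hl⟩ ⟨m, hm⟩

lemma injOn_alphaT (t : ℝ) {L : Set (ℝ × Ed n)} {S : Set (Ed n)} (hpos : 0 < volume S)
    (hfib : ∀ᵐ y : Ed n, TilesByUnitInterval fun l : fiber L S y => (l : ℝ × Ed n).1) :
    InjOn (alphaT t) L := by
  intro l hl m hm heq
  have hsnd : l.2 = m.2 := by simpa only [alphaT_snd] using congrArg Prod.snd heq
  have hvol : volume ((· + -l.2) ⁻¹' S) ≠ 0 := by
    rw [measure_preimage_add_right]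
    exact hpos.ne'
  obtain ⟨y, hyS, hy⟩ := Measure.exists_mem_of_measure_ne_zero_of_ae hvol (ae_restrict_of_ae hfib)
  replace hyS : y - l.2 ∈ S := by simpa [sub_eq_add_neg] using hyS
  obtain ⟨s, -, hs⟩ := hy.exists_alphaT_eq_add_on_fiber t
  have hmS : y - m.2 ∈ S := hsnd ▸ hyS
  rw [hs l ⟨hl, hyS⟩, hs m ⟨hm, hmS⟩] at heq
  exact add_right_cancel heq

lemma tsum_ofReal_indicator_sub_alphaT (t s : ℝ) (L : Set (ℝ × Ed n)) (J : Set ℝ)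
    (S : Set (Ed n)) (z : ℝ × Ed n) (hs : ∀ l ∈ fiber L S z.2, alphaT t l = l + (s, 0)) :
    ∑' l : L, ENNReal.ofReal ((J ×ˢ S).indicator (fun _ => (1 : ℝ)) (z - alphaT t l)) =
      ∑' l : L,
        ENNReal.ofReal ((J ×ˢ S).indicator (fun _ => (1 : ℝ)) (z - (s, 0) - (l : ℝ × Ed n))) := by
  refine tsum_congr fun l => ?_
  by_cases hS : z.2 - (l : ℝ × Ed n).2 ∈ S
  · rw [hs l ⟨l.2, hS⟩, sub_sub, add_comm]
  · have hnot : ∀ w : ℝ × Ed n, w.2 = z.2 - (l : ℝ × Ed n).2 → w ∉ J ×ˢ S :=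
      fun w hw hmem => hS (hw ▸ hmem.2)
    rw [indicator_of_notMem (hnot _ (by simp [alphaT_snd])),
      indicator_of_notMem (hnot _ (by simp))]

lemma isTiling_image_alphaT (t : ℝ) {L : Set (ℝ × Ed n)} {S : Set (Ed n)}
    (htile : IsTiling ((Icc (-(1/2) : ℝ) (1/2) ×ˢ S).indicator fun _ => (1 : ℝ)) L)
    (hinj : InjOn (alphaT t) L)
    (hfib : ∀ᵐ y : Ed n, TilesByUnitInterval fun l : fiber L S y => (l : ℝ × Ed n).1) :
    IsTiling ((Icc (-(1/2) : ℝ) (1/2) ×ˢ S).indicator fun _ => (1 : ℝ)) (alphaT t '' L) := by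
  rw [IsTiling, Measure.volume_eq_prod] at htile ⊢
  have hshift :=
    (measurePreserving_sub_right _ ((t, 0) : ℝ × Ed n)).quasiMeasurePreserving.ae htile
  have hfibz := (Measure.quasiMeasurePreserving_snd (μ := (volume : Measure ℝ))).ae hfib
  filter_upwards [htile, hshift, hfibz] with z h0 ht hz
  obtain ⟨s, hs01, hs⟩ := hz.exists_alphaT_eq_add_on_fiber t
  rw [tsum_image (fun l =>
      ENNReal.ofReal ((Icc (-(1/2) : ℝ) (1/2) ×ˢ S).indicator (fun _ => (1 : ℝ)) (z - l))) hinj,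
    tsum_ofReal_indicator_sub_alphaT t s L _ S z hs]
  rcases hs01 with rfl | rfl
  · rwa [Prod.mk_zero_zero, sub_zero]
  · exact ht

end AlphaT

theorem stmt15_general {n : ℕ} (S : Set (Ed n))
    (hpos : 0 < volume S) (t : ℝ) (L : Set (ℝ × Ed n))
    (htile : IsTiling
      (Set.indicator ((Set.Icc (-(1/2) : ℝ) (1/2)) ×ˢ S) (fun _ => (1 : ℝ))) L) :
    Set.InjOn (alphaT t) L ∧
    IsTiling
      (Set.indicator ((Set.Icc (-(1/2) : ℝ) (1/2)) ×ˢ S) (fun _ => (1 : ℝ)))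
      (alphaT t '' L) := by
  have hfib := htile.ae_tilesByUnitInterval_fiber
  have hinj := injOn_alphaT t hpos hfib
  exact ⟨hinj, isTiling_image_alphaT t htile hinj hfib⟩

theorem stmt15 {n : ℕ} (S : Set (Ed n)) (hB : Bornology.IsBounded S)
    (hM : MeasurableSet S) (hpos : 0 < volume S) (t : ℝ) (L : Set (ℝ × Ed n))
    (htile : IsTiling
      (Set.indicator ((Set.Icc (-(1/2) : ℝ) (1/2)) ×ˢ S) (fun _ => (1 : ℝ))) L) :
    Set.InjOn (alphaT t) L ∧
    IsTiling
      (Set.indicator ((Set.Icc (-(1/2) : ℝ) (1/2)) ×ˢ S) (fun _ => (1 : ℝ)))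
      (alphaT t '' L) :=
  stmt15_general S hpos t L htile
end
end
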